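/- arXiv:2105.07038 — 2 statements merged into one kernel-verified Lean document; each statement's English description precedes it below -/
import Mathlib

section
/- For every complete multipartite graph G with at least two nonempty parts and every 2-coloring of the edges of G, the vertex set of G can be covered by the vertex sets of two monochromatic connected subgraphs. Equivalently, tc_2(G) ≤ 2 for every complete multipartite graph G. -/
/-!
Pick `a` and `b` in different parts and let `r` be the color of `ab`. The `r`-stars at `a` and
`b` form an `r`-connected set. A vertex outside it is joined in color `!r` to each of `a`, `b`
whose part it avoids, hence to at least one of them. If some `!r`-edge joins the `!r`-stars at
`a` and `b`, their union is `!r`-connected and covers the rest; if one `!r`-star alone covers the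
rest, take it. Otherwise the uncovered vertices lie in the parts of `a` and `b`, both sides are
met, every edge between the sides has color `r`, and they span an `r`-connected complete
bipartite graph.
-/

open SimpleGraph

/-- The spanning subgraph of `G` consisting of the edges that receive color `b`
under the edge-coloring `c`. -/
def SimpleGraph.colorSubgraph {V : Type*} (G : SimpleGraph V) (c : Sym2 V → Bool) (b : Bool) :
    SimpleGraph V where
  Adj u v := G.Adj u v ∧ c s(u, v) = b
  symm := ⟨fun u v h => ⟨h.1.symm, by rw [Sym2.eq_swap]; exact h.2⟩⟩
  loopless := ⟨fun u h => G.irrefl h.1⟩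

/-- There are two monochromatic connected subgraphs, each of diameter at most `d`,
whose vertex sets together cover all of `V`. -/
def HasMonoCover {V : Type*} (G : SimpleGraph V) (c : Sym2 V → Bool) (d : ℕ) : Prop :=
  ∃ (S₁ S₂ : Set V) (b₁ b₂ : Bool),
    (SimpleGraph.induce S₁ (G.colorSubgraph c b₁)).Connected ∧
    (SimpleGraph.induce S₁ (G.colorSubgraph c b₁)).ediam ≤ (d : ℕ∞) ∧
    (SimpleGraph.induce S₂ (G.colorSubgraph c b₂)).Connected ∧
    (SimpleGraph.induce S₂ (G.colorSubgraph c b₂)).ediam ≤ (d : ℕ∞) ∧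
    S₁ ∪ S₂ = Set.univ

namespace SimpleGraph

variable {V : Type*}

lemma induce_insert_neighborSet_connected (H : SimpleGraph V) (x : V) :
    (H.induce (insert x (H.neighborSet x))).Connected := by
  rw [connected_iff_exists_forall_reachable]
  refine ⟨⟨x, Set.mem_insert x _⟩, ?_⟩
  rintro ⟨v, rfl | hxv⟩
  · rfl
  · exact Adj.reachable (G := H.induce _) (v := ⟨v, Set.mem_insert_of_mem x hxv⟩) hxv

lemma induce_connected_of_forall_adj_or_adj (H : SimpleGraph V) {S : Set V} {x y : V}
    (hx : x ∈ S) (hy : y ∈ S) (hxy : H.Adj x y) (hS : ∀ v ∈ S, H.Adj x v ∨ H.Adj y v) :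
    (H.induce S).Connected := by
  rw [connected_iff_exists_forall_reachable]
  refine ⟨⟨x, hx⟩, fun ⟨v, hv⟩ => ?_⟩
  rcases hS v hv with hxv | hyv
  · exact Adj.reachable (G := H.induce S) (u := ⟨x, hx⟩) (v := ⟨v, hv⟩) hxv
  · exact (Adj.reachable (G := H.induce S) (u := ⟨x, hx⟩) (v := ⟨y, hy⟩) hxy).trans
      (Adj.reachable (G := H.induce S) (v := ⟨v, hv⟩) hyv)

variable (G : SimpleGraph V) (c : Sym2 V → Bool)

def IsMonoConnected (S : Set V) : Prop :=
  ∃ b, (induce S (G.colorSubgraph c b)).Connected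

def colorStar (b : Bool) (x : V) : Set V :=
  insert x ((G.colorSubgraph c b).neighborSet x)

lemma colorSubgraph_adj_not_of_not_adj {b : Bool} {u v : V} (huv : G.Adj u v)
    (h : ¬(G.colorSubgraph c b).Adj u v) : (G.colorSubgraph c (!b)).Adj u v :=
  ⟨huv, Bool.eq_not_iff.mpr fun h' => h ⟨huv, h'⟩⟩

lemma colorSubgraph_adj_not_of_not_mem_colorStar {b : Bool} {x v : V} (hxv : G.Adj x v)
    (hv : v ∉ G.colorStar c b x) : (G.colorSubgraph c (!b)).Adj x v :=
  G.colorSubgraph_adj_not_of_not_adj c hxv fun h => hv (Set.mem_insert_of_mem x h)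

lemma isMonoConnected_colorStar_union_of_adj {b : Bool} {x y u v : V}
    (hu : u ∈ G.colorStar c b x) (hv : v ∈ G.colorStar c b y)
    (huv : (G.colorSubgraph c b).Adj u v) :
    G.IsMonoConnected c (G.colorStar c b x ∪ G.colorStar c b y) :=
  ⟨b, connected_induce_union (induce_insert_neighborSet_connected _ x).preconnected
    (induce_insert_neighborSet_connected _ y).preconnected hu hv huv⟩

end SimpleGraph

section Multipartite

variable {ι : Type*} {V : ι → Type*} (c : Sym2 (Σ i, V i) → Bool)

lemma induce_compl_colorStar_union_connected {a b u w : Σ i, V i} (hab : a.1 ≠ b.1)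
    (hjoin : ¬∃ x ∈ (completeMultipartiteGraph V).colorStar c (!c s(a, b)) a,
      ∃ y ∈ (completeMultipartiteGraph V).colorStar c (!c s(a, b)) b,
        ((completeMultipartiteGraph V).colorSubgraph c (!c s(a, b))).Adj x y)
    (hu : u ∉ (completeMultipartiteGraph V).colorStar c (c s(a, b)) a ∪
      (completeMultipartiteGraph V).colorStar c (c s(a, b)) b) (hua : u.1 = a.1)
    (hw : w ∉ (completeMultipartiteGraph V).colorStar c (c s(a, b)) a ∪
      (completeMultipartiteGraph V).colorStar c (c s(a, b)) b) (hwb : w.1 = b.1) :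
    (induce ((completeMultipartiteGraph V).colorStar c (c s(a, b)) a ∪
      (completeMultipartiteGraph V).colorStar c (c s(a, b)) b)ᶜ
      ((completeMultipartiteGraph V).colorSubgraph c (c s(a, b)))).Connected := by
  set G := completeMultipartiteGraph V
  set r := c s(a, b)
  have hstar_a : ∀ v ∉ G.colorStar c r a ∪ G.colorStar c r b, v.1 ≠ a.1 →
      v ∈ G.colorStar c (!r) a := fun v hv hva =>
    Set.mem_insert_of_mem a (G.colorSubgraph_adj_not_of_not_mem_colorStar c (Ne.symm hva)
      fun h => hv (Or.inl h))
  have hstar_b : ∀ v ∉ G.colorStar c r a ∪ G.colorStar c r b, v.1 ≠ b.1 →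
      v ∈ G.colorStar c (!r) b := fun v hv hvb =>
    Set.mem_insert_of_mem b (G.colorSubgraph_adj_not_of_not_mem_colorStar c (Ne.symm hvb)
      fun h => hv (Or.inr h))
  have hred : ∀ x ∈ G.colorStar c (!r) a, ∀ y ∈ G.colorStar c (!r) b,
      x.1 ≠ y.1 → (G.colorSubgraph c r).Adj x y := fun x hx y hy hxy => by
    simpa using
      G.colorSubgraph_adj_not_of_not_adj c (b := !r) hxy fun h => hjoin ⟨x, hx, y, hy, h⟩
  have hwa := hstar_a w hw (hwb ▸ hab.symm)
  have hub := hstar_b u hu (hua ▸ hab)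
  refine (G.colorSubgraph c r).induce_connected_of_forall_adj_or_adj hw hu
    (hred w hwa u hub (by rw [hwb, hua]; exact hab.symm)) fun v hv => ?_
  by_cases hva : v.1 = a.1
  · exact Or.inl (hred w hwa v (hstar_b v hv (hva ▸ hab)) (by rw [hwb, hva]; exact hab.symm))
  by_cases hvb : v.1 = b.1
  · exact Or.inr (hred v (hstar_a v hv hva) u hub (by rw [hvb, hua]; exact hab.symm)).symm
  -- `v` lies in both `!r`-stars, so the `!r`-edge `av` joins them.
  refine absurd ⟨a, Set.mem_insert a _, v, hstar_b v hv hvb, ?_⟩ hjoin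
  exact G.colorSubgraph_adj_not_of_not_mem_colorStar c (Ne.symm hva) fun h => hv (Or.inl h)

lemma exists_isMonoConnected_superset_compl_colorStar_union {a b : Σ i, V i} (hab : a.1 ≠ b.1) :
    ∃ S, (completeMultipartiteGraph V).IsMonoConnected c S ∧
      ((completeMultipartiteGraph V).colorStar c (c s(a, b)) a ∪
        (completeMultipartiteGraph V).colorStar c (c s(a, b)) b)ᶜ ⊆ S := by
  set G := completeMultipartiteGraph V
  set r := c s(a, b)
  set U := (G.colorStar c r a ∪ G.colorStar c r b)ᶜ
  have hstar_a : ∀ v ∈ U, v.1 ≠ a.1 → v ∈ G.colorStar c (!r) a := fun v hv hva =>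
    Set.mem_insert_of_mem a (G.colorSubgraph_adj_not_of_not_mem_colorStar c (Ne.symm hva)
      fun h => hv (Or.inl h))
  have hstar_b : ∀ v ∈ U, v.1 ≠ b.1 → v ∈ G.colorStar c (!r) b := fun v hv hvb =>
    Set.mem_insert_of_mem b (G.colorSubgraph_adj_not_of_not_mem_colorStar c (Ne.symm hvb)
      fun h => hv (Or.inr h))
  by_cases hjoin : ∃ x ∈ G.colorStar c (!r) a, ∃ y ∈ G.colorStar c (!r) b,
      (G.colorSubgraph c (!r)).Adj x y
  · obtain ⟨x, hx, y, hy, hxy⟩ := hjoin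
    refine ⟨_, G.isMonoConnected_colorStar_union_of_adj c hx hy hxy, fun v hv => ?_⟩
    by_cases hva : v.1 = a.1
    · exact Or.inr (hstar_b v hv (hva ▸ hab))
    · exact Or.inl (hstar_a v hv hva)
  by_cases hA : ∀ v ∈ U, v.1 ≠ a.1
  · exact ⟨_, ⟨!r, induce_insert_neighborSet_connected _ a⟩, fun v hv => hstar_a v hv (hA v hv)⟩
  by_cases hB : ∀ v ∈ U, v.1 ≠ b.1
  · exact ⟨_, ⟨!r, induce_insert_neighborSet_connected _ b⟩, fun v hv => hstar_b v hv (hB v hv)⟩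
  push Not at hA hB
  obtain ⟨u, hu, hua⟩ := hA
  obtain ⟨w, hw, hwb⟩ := hB
  exact ⟨U, ⟨r, induce_compl_colorStar_union_connected c hab hjoin hu hua hw hwb⟩, subset_rfl⟩

end Multipartite

theorem stmt1_general {ι : Type*} (V : ι → Type*)
    [∀ i, Nonempty (V i)] [Nontrivial ι]
    (col : Sym2 (Σ i, V i) → Bool) :
    ∃ (S₁ S₂ : Set (Σ i, V i)) (b₁ b₂ : Bool),
      (SimpleGraph.induce S₁ ((completeMultipartiteGraph V).colorSubgraph col b₁)).Connected ∧
      (SimpleGraph.induce S₂ ((completeMultipartiteGraph V).colorSubgraph col b₂)).Connected ∧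
      S₁ ∪ S₂ = Set.univ := by
  obtain ⟨i, j, hij⟩ := exists_pair_ne ι
  let a : Σ i, V i := ⟨i, Classical.arbitrary _⟩
  let b : Σ i, V i := ⟨j, Classical.arbitrary _⟩
  set G := completeMultipartiteGraph V
  have hab : (G.colorSubgraph col (col s(a, b))).Adj a b := ⟨hij, rfl⟩
  obtain ⟨b₁, hS₁⟩ := G.isMonoConnected_colorStar_union_of_adj col
    (Set.mem_insert a _) (Set.mem_insert b _) hab
  obtain ⟨S₂, ⟨b₂, hS₂⟩, hcover⟩ :=
    exists_isMonoConnected_superset_compl_colorStar_union col (a := a) (b := b) hij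
  exact ⟨_, S₂, b₁, b₂, hS₁, hS₂, Set.compl_subset_iff_union.mp hcover⟩

theorem stmt1 {ι : Type*} (V : ι → Type*) [Fintype ι] [∀ i, Fintype (V i)]
    [∀ i, Nonempty (V i)] [Nontrivial ι]
    (col : Sym2 (Σ i, V i) → Bool) :
    ∃ (S₁ S₂ : Set (Σ i, V i)) (b₁ b₂ : Bool),
      (SimpleGraph.induce S₁ ((completeMultipartiteGraph V).colorSubgraph col b₁)).Connected ∧
      (SimpleGraph.induce S₂ ((completeMultipartiteGraph V).colorSubgraph col b₂)).Connected ∧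
      S₁ ∪ S₂ = Set.univ :=
  stmt1_general V col
end

section
/- Fix an integer r ≥ 2. Suppose that every finite r-partite hypergraph H satisfies τ(H) ≤ (r−1)·ν(H). Then for every finite simple graph G and every r-coloring of the edges of G, the vertex set of G can be covered by the vertex sets of at most (r−1)·α(G) monochromatic connected subgraphs; that is, tc_r(G) ≤ (r−1)·α(G). -/
open SimpleGraph

/-- `S` is a vertex cover of the hypergraph with edge set `E`: it meets every edge. -/
def IsHypVertexCover {W : Type*} (E : Finset (Finset W)) (S : Finset W) : Prop :=
  ∀ e ∈ E, ∃ v ∈ S, v ∈ e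

/-- The vertex cover number `τ` of the hypergraph with edge set `E`: the least size of a
vertex cover. -/
noncomputable def hypTau {W : Type*} (E : Finset (Finset W)) : ℕ :=
  sInf {n | ∃ S : Finset W, IsHypVertexCover E S ∧ S.card = n}

/-- The matching number `ν` of the hypergraph with edge set `E`: the greatest size of a
set of pairwise disjoint edges. -/
noncomputable def hypNu {W : Type*} (E : Finset (Finset W)) : ℕ :=
  sSup {n | ∃ M : Finset (Finset W), M ⊆ E ∧
    (∀ e ∈ M, ∀ f ∈ M, e ≠ f → Disjoint e f) ∧ M.card = n}

/-- The hypergraph with edge set `E` is `r`-partite: the vertices can be partitioned into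
`r` classes such that no edge contains two distinct vertices of the same class. -/
def IsHypRPartite {W : Type*} (r : ℕ) (E : Finset (Finset W)) : Prop :=
  ∃ p : W → Fin r, ∀ e ∈ E, ∀ u ∈ e, ∀ v ∈ e, u ≠ v → p u ≠ p v

/-- The spanning subgraph of `G` consisting of the edges that receive color `b`
under the edge-coloring `c` with `r` colors. -/
def SimpleGraph.monoSubgraph {V : Type*} {r : ℕ} (G : SimpleGraph V) (c : Sym2 V → Fin r)
    (b : Fin r) : SimpleGraph V where
  Adj u v := G.Adj u v ∧ c s(u, v) = b
  symm := ⟨fun u v h => ⟨h.1.symm, by rw [Sym2.eq_swap]; exact h.2⟩⟩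
  loopless := ⟨fun u h => G.irrefl h.1⟩

/-- The independence number `α` of a graph: the greatest size of a set of pairwise
non-adjacent vertices. -/
noncomputable def indepNum {V : Type*} (G : SimpleGraph V) : ℕ :=
  sSup {n | ∃ S : Finset V, (∀ u ∈ S, ∀ v ∈ S, ¬ G.Adj u v) ∧ S.card = n}

/-- The vertex set of `G` can be covered by at most `t` monochromatic connected subgraphs
with respect to the `r`-coloring `c`. -/
def HasTreeCover {V : Type*} {r : ℕ} (G : SimpleGraph V) (c : Sym2 V → Fin r) (t : ℕ) : Prop :=
  ∃ (m : ℕ) (S : Fin m → Set V) (b : Fin m → Fin r), m ≤ t ∧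
    (∀ i, (SimpleGraph.induce (S i) (G.monoSubgraph c (b i))).Connected) ∧
    (⋃ i, S i) = Set.univ

/-!
Consider the `r`-partite hypergraph whose vertices are the monochromatic components, colour `b`
forming the `b`-th class, and whose edges are, for each vertex `v` of `G`, the `r` components
containing `v`. A vertex cover of it is a cover of `V(G)` by monochromatic connected subgraphs.
Picking one vertex of `G` from each edge of a matching gives an independent set, since two
adjacent vertices lie in a common component of the colour of the edge joining them; hence
`ν ≤ α`, and the assumed bound `τ ≤ (r - 1) ν` finishes the proof.
-/

section Hypergraph

variable {W : Type*}

theorem exists_isHypVertexCover_card_eq_hypTau [Fintype W] {E : Finset (Finset W)}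
    (hE : ∀ e ∈ E, e.Nonempty) : ∃ S, IsHypVertexCover E S ∧ S.card = hypTau E := by
  have hcover : IsHypVertexCover E Finset.univ := fun e he ↦
    (hE e he).imp fun w hw ↦ ⟨Finset.mem_univ w, hw⟩
  exact Nat.sInf_mem (s := {n | ∃ S, IsHypVertexCover E S ∧ S.card = n}) ⟨_, _, hcover, rfl⟩

theorem card_le_indepNum {V : Type*} [Fintype V] (G : SimpleGraph V) {S : Finset V}
    (hS : ∀ u ∈ S, ∀ v ∈ S, ¬G.Adj u v) : S.card ≤ _root_.indepNum G := by
  apply le_csSup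
  · exact ⟨Fintype.card V, by rintro _ ⟨T, -, rfl⟩; exact T.card_le_univ⟩
  · exact ⟨S, hS, rfl⟩

theorem hypNu_image_le_indepNum {V : Type*} [Fintype V] [DecidableEq W] (G : SimpleGraph V)
    (f : V → Finset W) (hf : ∀ u v, G.Adj u v → ¬Disjoint (f u) (f v)) :
    hypNu (Finset.univ.image f) ≤ _root_.indepNum G := by
  refine csSup_le ⟨0, ∅, Finset.empty_subset _, by simp, rfl⟩ ?_
  rintro _ ⟨M, hME, hdisj, rfl⟩
  have hsurj : Set.SurjOn f Set.univ M := fun e he ↦ by simpa using hME he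
  obtain ⟨S, -, hinj, rfl⟩ := Finset.exists_subset_injOn_image_eq_of_surjOn _ M hsurj
  rw [Finset.card_image_of_injOn hinj]
  refine card_le_indepNum G fun u hu v hv hadj ↦ hf u v hadj ?_
  have hne : f u ≠ f v := fun h ↦ G.ne_of_adj hadj (hinj hu hv h)
  exact hdisj _ (Finset.mem_image_of_mem f hu) _ (Finset.mem_image_of_mem f hv) hne

end Hypergraph

section ComponentHypergraph

variable {V ι : Type*} [Fintype ι] (H : ι → SimpleGraph V)

def componentEdge (v : V) : Finset (Σ i, (H i).ConnectedComponent) :=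
  Finset.univ.map ⟨fun i ↦ ⟨i, (H i).connectedComponentMk v⟩, fun _ _ h ↦ congrArg Sigma.fst h⟩

variable {H}

theorem mem_componentEdge {v : V} {w : Σ i, (H i).ConnectedComponent} :
    w ∈ componentEdge H v ↔ (H w.1).connectedComponentMk v = w.2 := by
  obtain ⟨i, C⟩ := w
  simp only [componentEdge, Finset.mem_map, Finset.mem_univ, true_and]
  constructor
  · rintro ⟨_, ⟨⟩⟩
    rfl
  · rintro rfl
    exact ⟨i, rfl⟩

theorem componentEdge_nonempty [Nonempty ι] (v : V) : (componentEdge H v).Nonempty :=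
  Finset.univ_nonempty.map

theorem eq_of_mem_componentEdge {v : V} {w w' : Σ i, (H i).ConnectedComponent}
    (hw : w ∈ componentEdge H v) (hw' : w' ∈ componentEdge H v) (h : w.1 = w'.1) : w = w' := by
  obtain ⟨i, C⟩ := w
  obtain ⟨i', C'⟩ := w'
  dsimp only at h
  subst h
  rw [mem_componentEdge] at hw hw'
  exact congrArg (Sigma.mk i) (hw.symm.trans hw')

theorem not_disjoint_componentEdge_of_adj {i : ι} {u v : V} (h : (H i).Adj u v) :
    ¬Disjoint (componentEdge H u) (componentEdge H v) :=
  Finset.not_disjoint_iff.2 ⟨⟨i, (H i).connectedComponentMk u⟩, mem_componentEdge.2 rfl,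
    mem_componentEdge.2 (ConnectedComponent.sound h.reachable).symm⟩

end ComponentHypergraph

theorem isHypRPartite_image_componentEdge {V : Type*} [Fintype V] {r : ℕ}
    {H : Fin r → SimpleGraph V} [DecidableEq (Σ i, (H i).ConnectedComponent)] :
    IsHypRPartite r (Finset.univ.image (componentEdge H)) := by
  refine ⟨Sigma.fst, fun e he u hu v hv huv ↦ ?_⟩
  obtain ⟨x, -, rfl⟩ := Finset.mem_image.1 he
  exact fun h ↦ huv (eq_of_mem_componentEdge hu hv h)

theorem hasTreeCover_of_isHypVertexCover {V : Type*} [Fintype V] {r : ℕ} {G : SimpleGraph V}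
    {c : Sym2 V → Fin r} [DecidableEq (Σ b, (G.monoSubgraph c b).ConnectedComponent)]
    {S : Finset (Σ b, (G.monoSubgraph c b).ConnectedComponent)}
    (hS : IsHypVertexCover (Finset.univ.image (componentEdge (G.monoSubgraph c))) S)
    {t : ℕ} (ht : S.card ≤ t) : HasTreeCover G c t := by
  refine ⟨S.card, fun i ↦ (S.equivFin.symm i).1.2.supp, fun i ↦ (S.equivFin.symm i).1.1, ht,
    fun i ↦ (ConnectedComponent.maximal_connected_induce_supp _).1, ?_⟩
  refine Set.eq_univ_of_forall fun v ↦ Set.mem_iUnion.2 ?_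
  obtain ⟨w, hwS, hw⟩ := hS _ (Finset.mem_image_of_mem _ (Finset.mem_univ v))
  refine ⟨S.equivFin ⟨w, hwS⟩, ?_⟩
  rw [Equiv.symm_apply_apply]
  exact (ConnectedComponent.mem_supp_iff _ _).2 (mem_componentEdge.1 hw)

theorem stmt13_general (r : ℕ)
    (ryser : ∀ (W : Type) [Fintype W] [DecidableEq W] (E : Finset (Finset W)),
      (∀ e ∈ E, e.Nonempty) → IsHypRPartite r E → hypTau E ≤ (r - 1) * hypNu E) :
    ∀ (V : Type) [Fintype V] (G : SimpleGraph V) (c : Sym2 V → Fin r),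
      HasTreeCover G c ((r - 1) * _root_.indepNum G) := by
  intro V _ G c
  classical
  set E := Finset.univ.image (componentEdge (G.monoSubgraph c))
  have hE : ∀ e ∈ E, e.Nonempty := by
    rintro _ he
    obtain ⟨v, -, rfl⟩ := Finset.mem_image.1 he
    have : Nonempty (Fin r) := ⟨c s(v, v)⟩
    exact componentEdge_nonempty v
  have hnu : hypNu E ≤ _root_.indepNum G :=
    hypNu_image_le_indepNum G _ fun u v huv ↦
      not_disjoint_componentEdge_of_adj (i := c s(u, v)) ⟨huv, rfl⟩
  obtain ⟨S, hS, hcard⟩ := exists_isHypVertexCover_card_eq_hypTau hE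
  refine hasTreeCover_of_isHypVertexCover hS ?_
  calc S.card = hypTau E := hcard
    _ ≤ (r - 1) * hypNu E := ryser _ E hE isHypRPartite_image_componentEdge
    _ ≤ (r - 1) * _root_.indepNum G := Nat.mul_le_mul_left _ hnu

theorem stmt13 (r : ℕ) (hr : 2 ≤ r)
    (ryser : ∀ (W : Type) [Fintype W] [DecidableEq W] (E : Finset (Finset W)),
      (∀ e ∈ E, e.Nonempty) → IsHypRPartite r E → hypTau E ≤ (r - 1) * hypNu E) :
    ∀ (V : Type) [Fintype V] (G : SimpleGraph V) (c : Sym2 V → Fin r),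
      HasTreeCover G c ((r - 1) * _root_.indepNum G) :=
  stmt13_general r ryser
end
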